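/- Let 1 ≤ n ≤ d be integers and let q be a positive integer. Then the number of q-primitive matrices in M_{d×n}(ℤ/qℤ) equals q^{dn}·∏_{p prime, p∣q} ∏_{j=d+1−n}^{d} (1 − p^{−j}) (an identity of real numbers). -/

import Mathlib

/-!
Rows of `R` over `ℤ/q` generate `(ℤ/q)ⁿ` iff for every prime `p ∣ q` their reductions generate
`𝔽_pⁿ`: if `N + pM = M` for every `p ∣ q`, then `N + qM = M` because the property is
multiplicative in the modulus, and `qM = 0`. By the Chinese remainder theorem, reduction modulo all
primes `p ∣ q` is a surjective additive map `M_{d×n}(ℤ/q) → ∏ₚ M_{d×n}(𝔽_p)`, so `q`-primitive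
matrices form the preimage of a product set and number `q^{dn} ∏ₚ Nₚ / p^{dn}`. Over `𝔽_p` the rows
span iff the `n` columns in `𝔽_p^d` are linearly independent, so `Nₚ = ∏_{i<n} (p^d - p^i)`.
-/

open Matrix Function

section Rows

variable {A ι κ : Type*} [CommRing A] [Fintype ι]

theorem Matrix.span_row_eq_top_iff_surjective_vecMul (R : Matrix ι κ A) :
    Submodule.span A (Set.range R.row) = ⊤ ↔ Surjective fun v => v ᵥ* R := by
  rw [← range_vecMulLinear, LinearMap.range_eq_top]
  rfl

theorem Matrix.span_row_map_eq_top {B : Type*} [CommRing B] {f : A →+* B} (hf : Surjective f)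
    {R : Matrix ι κ A} (hR : Submodule.span A (Set.range R.row) = ⊤) :
    Submodule.span B (Set.range (R.map f).row) = ⊤ := by
  rw [span_row_eq_top_iff_surjective_vecMul] at hR ⊢
  intro y
  obtain ⟨x, rfl⟩ := hf.comp_left y
  obtain ⟨v, rfl⟩ := hR x
  exact ⟨f ∘ v, funext fun j => (RingHom.map_vecMul f R v j).symm⟩

end Rows

theorem Matrix.span_row_eq_top_iff_linearIndependent_col {K m n : Type*} [Field K] [Fintype m]
    [Fintype n] (A : Matrix m n K) :
    Submodule.span K (Set.range A.row) = ⊤ ↔ LinearIndependent K A.col := by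
  change _ ↔ LinearIndependent K Aᵀ.row
  rw [linearIndependent_iff_card_eq_finrank_span, Set.finrank, ← rank_eq_finrank_span_row,
    rank_transpose, rank_eq_finrank_span_row, ← Module.finrank_fintype_fun_eq_card K]
  exact ⟨fun h => by rw [h, finrank_top], fun h => Submodule.eq_top_of_finrank_eq h.symm⟩

theorem Matrix.card_span_row_eq_top {K : Type*} [Field K] [Fintype K] {d n : ℕ} (hnd : n ≤ d) :
    Nat.card {A : Matrix (Fin d) (Fin n) K // Submodule.span K (Set.range A.row) = ⊤} =
      ∏ i : Fin n, (Fintype.card K ^ d - Fintype.card K ^ (i : ℕ)) := by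
  have e : {A : Matrix (Fin d) (Fin n) K // Submodule.span K (Set.range A.row) = ⊤} ≃
      {s : Fin n → Fin d → K // LinearIndependent K s} :=
    (transposeAddEquiv (Fin d) (Fin n) K).toEquiv.subtypeEquiv fun A =>
      span_row_eq_top_iff_linearIndependent_col A
  rw [Nat.card_congr e, card_linearIndependent (by simpa using hnd),
    Module.finrank_fintype_fun_eq_card, Fintype.card_fin]

section Reduction

theorem AddSubgroup.eq_top_of_forall_primeFactors {M : Type*} [AddCommGroup M]
    (N : AddSubgroup M) {q : ℕ} (hq : q ≠ 0) (hqM : ∀ x : M, q • x = 0)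
    (hN : ∀ p ∈ q.primeFactors, ∀ x : M, ∃ z, x - p • z ∈ N) : N = ⊤ := by
  let P : ℕ → Prop := fun k => ∀ x : M, ∃ z, x - k • z ∈ N
  have hmul : ∀ a b, P a → P b → P (a * b) := by
    intro a b ha hb x
    obtain ⟨y, hy⟩ := ha x
    obtain ⟨z, hz⟩ := hb y
    refine ⟨z, ?_⟩
    have := N.add_mem hy (N.nsmul_mem hz a)
    rwa [smul_sub, smul_smul, sub_add_sub_cancel] at this
  have hP : P q := by
    rw [← Nat.prod_primeFactorsList hq]
    refine List.prod_induction P hmul (fun x => ⟨x, by simp [N.zero_mem]⟩) fun p hp => ?_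
    exact hN p (Nat.mem_primeFactors_iff_mem_primeFactorsList.2 hp)
  refine eq_top_iff.2 fun x _ => ?_
  obtain ⟨z, hz⟩ := hP x
  rwa [hqM, sub_zero] at hz

variable {q : ℕ} [NeZero q]

theorem ZMod.exists_eq_mul_of_castHom_eq_zero {p : ℕ} (h : p ∣ q) {a : ZMod q}
    (ha : ZMod.castHom h (ZMod p) a = 0) : ∃ b, a = p * b := by
  rw [← ZMod.natCast_zmod_val a, map_natCast, ZMod.natCast_eq_zero_iff] at ha
  obtain ⟨c, hc⟩ := ha
  exact ⟨c, by rw [← ZMod.natCast_zmod_val a, hc, Nat.cast_mul]⟩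

variable {ι κ : Type*} [Fintype ι]

theorem ZMod.exists_sub_smul_mem_span_row {p : ℕ} (h : p ∣ q) (R : Matrix ι κ (ZMod q))
    (hR : Submodule.span (ZMod p) (Set.range (R.map (ZMod.castHom h (ZMod p))).row) = ⊤)
    (x : κ → ZMod q) : ∃ z, x - p • z ∈ Submodule.span (ZMod q) (Set.range R.row) := by
  rw [span_row_eq_top_iff_surjective_vecMul] at hR
  obtain ⟨v, hv⟩ := hR (ZMod.castHom h (ZMod p) ∘ x)
  obtain ⟨v', rfl⟩ := (ZMod.castHom_surjective h).comp_left v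
  dsimp only at hv
  have hker (j : κ) : ZMod.castHom h (ZMod p) ((x - v' ᵥ* R) j) = 0 := by
    rw [Pi.sub_apply, map_sub, RingHom.map_vecMul, hv, Function.comp_apply, sub_self]
  choose z hz using fun j => ZMod.exists_eq_mul_of_castHom_eq_zero h (hker j)
  have hx : x - v' ᵥ* R = p • z := funext fun j => by simp [hz j]
  refine ⟨z, ?_⟩
  rw [← hx, sub_sub_cancel, ← range_vecMulLinear]
  exact ⟨v', rfl⟩

theorem ZMod.span_row_eq_top_iff_forall_primeFactors (R : Matrix ι κ (ZMod q)) :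
    Submodule.span (ZMod q) (Set.range R.row) = ⊤ ↔ ∀ p : q.primeFactors,
      Submodule.span (ZMod p)
        (Set.range (R.map (ZMod.castHom (Nat.dvd_of_mem_primeFactors p.2) (ZMod p))).row) = ⊤ := by
  refine ⟨fun hR p => span_row_map_eq_top (ZMod.castHom_surjective _) hR, fun hR => ?_⟩
  rw [← Submodule.toAddSubgroup_eq_top]
  refine AddSubgroup.eq_top_of_forall_primeFactors _ (NeZero.ne q) (fun x => ?_) fun p hp => ?_
  · funext j; simp
  · exact ZMod.exists_sub_smul_mem_span_row _ R (hR ⟨p, hp⟩)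

end Reduction

theorem ZMod.castHom_primeFactors_surjective (q : ℕ) :
    Surjective (RingHom.pi fun p : q.primeFactors =>
      ZMod.castHom (Nat.dvd_of_mem_primeFactors p.2) (ZMod (p : ℕ))) := by
  have hrad : ∏ p : q.primeFactors, (p : ℕ) ∣ q := by
    simpa only [Finset.prod_coe_sort q.primeFactors (fun p => p)] using Nat.prod_primeFactors_dvd q
  let crt := ZMod.prodEquivPi (fun p : q.primeFactors => (p : ℕ)) fun a b hab =>
    (Nat.coprime_primes (Nat.prime_of_mem_primeFactors a.2) (Nat.prime_of_mem_primeFactors b.2)).2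
      (Subtype.coe_injective.ne hab)
  have hfactor : RingHom.pi (fun p : q.primeFactors =>
      ZMod.castHom (Nat.dvd_of_mem_primeFactors p.2) (ZMod (p : ℕ))) =
      crt.toRingHom.comp (ZMod.castHom hrad _) := RingHom.ext_zmod _ _
  rw [hfactor]
  exact crt.surjective.comp (ZMod.castHom_surjective hrad)

def Matrix.reduceModPrimeFactors (m n : Type*) (q : ℕ) :
    Matrix m n (ZMod q) →+ Π p : q.primeFactors, Matrix m n (ZMod p) :=
  AddMonoidHom.pi fun p =>
    (ZMod.castHom (Nat.dvd_of_mem_primeFactors p.2) (ZMod (p : ℕ))).toAddMonoidHom.mapMatrix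

theorem Matrix.reduceModPrimeFactors_surjective (m n : Type*) (q : ℕ) :
    Surjective (reduceModPrimeFactors m n q) := by
  intro w
  choose R hR using fun i j => ZMod.castHom_primeFactors_surjective q fun p => w p i j
  exact ⟨R, funext fun p => Matrix.ext fun i j => congrFun (hR i j) p⟩

theorem AddMonoidHom.card_preimage_mul_card {G H : Type*} [AddGroup G] [AddGroup H] (f : G →+ H)
    (hf : Surjective f) (T : Set H) :
    Nat.card (f ⁻¹' T) * Nat.card H = Nat.card G * Nat.card T := by
  let e := QuotientAddGroup.quotientKerEquivOfSurjective f hf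
  have hpre : f ⁻¹' T = QuotientAddGroup.mk ⁻¹' (e ⁻¹' T) := rfl
  rw [hpre, Nat.card_congr (QuotientAddGroup.preimageMkEquivAddSubgroupProdSet _ _), Nat.card_prod,
    AddSubgroup.card_eq_card_quotient_mul_card_addSubgroup f.ker, Nat.card_congr e.toEquiv,
    Nat.card_preimage_of_injective e.injective (by simp [e.surjective.range_eq])]
  ring

theorem Nat.card_matrix_zmod (d n p : ℕ) :
    Nat.card (Matrix (Fin d) (Fin n) (ZMod p)) = p ^ (d * n) := by
  rw [Matrix, Nat.card_pi]
  simp only [Nat.card_pi, Nat.card_zmod, Finset.prod_const, Finset.card_univ, Fintype.card_fin,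
    pow_mul']

theorem ZMod.card_span_row_eq_top_mul {q d n : ℕ} [NeZero q] (hnd : n ≤ d) :
    Nat.card {R : Matrix (Fin d) (Fin n) (ZMod q) //
        Submodule.span (ZMod q) (Set.range R.row) = ⊤} * ∏ p ∈ q.primeFactors, p ^ (d * n) =
      q ^ (d * n) * ∏ p ∈ q.primeFactors, ∏ i : Fin n, (p ^ d - p ^ (i : ℕ)) := by
  let T : Set (Π p : q.primeFactors, Matrix (Fin d) (Fin n) (ZMod p)) :=
    Set.univ.pi fun p => {S | Submodule.span (ZMod p) (Set.range S.row) = ⊤}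
  have hpre : {R : Matrix (Fin d) (Fin n) (ZMod q) |
      Submodule.span (ZMod q) (Set.range R.row) = ⊤} = reduceModPrimeFactors _ _ q ⁻¹' T := by
    ext R
    simp [T, ZMod.span_row_eq_top_iff_forall_primeFactors R, reduceModPrimeFactors]
  have hT : Nat.card T = ∏ p ∈ q.primeFactors, ∏ i : Fin n, (p ^ d - p ^ (i : ℕ)) := by
    rw [Nat.card_congr (Equiv.Set.univPi _), Nat.card_pi, ← Finset.prod_coe_sort q.primeFactors]
    refine Finset.prod_congr rfl fun p _ => ?_
    have : Fact (p : ℕ).Prime := ⟨Nat.prime_of_mem_primeFactors p.2⟩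
    exact (card_span_row_eq_top hnd).trans (by simp only [ZMod.card])
  have hcount := (reduceModPrimeFactors (Fin d) (Fin n) q).card_preimage_mul_card
    (reduceModPrimeFactors_surjective _ _ q) T
  rw [← hpre, hT, Nat.card_pi, Nat.card_matrix_zmod,
    Finset.prod_congr rfl fun (p : q.primeFactors) _ => Nat.card_matrix_zmod d n p,
    Finset.prod_coe_sort q.primeFactors fun p => p ^ (d * n)] at hcount
  exact hcount

theorem prod_pow_sub_pow_eq_pow_mul_prod_one_sub_zpow {K : Type*} [Field K] {x : K} (hx : x ≠ 0)
    {d n : ℕ} (hnd : n ≤ d) :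
    ∏ i : Fin n, (x ^ d - x ^ (i : ℕ)) =
      x ^ (d * n) * ∏ j ∈ Finset.Icc (d + 1 - n) d, (1 - x ^ (-(j : ℤ))) := by
  have hreflect :=
    Finset.prod_Ico_reflect (fun j : ℕ => 1 - x ^ (-(j : ℤ))) 0 (by omega : n ≤ d + 1)
  rw [Nat.sub_zero, Finset.Ico_add_one_right_eq_Icc, ← Finset.range_eq_Ico] at hreflect
  rw [← hreflect, Fin.prod_univ_eq_prod_range (fun i => x ^ d - x ^ i), pow_mul,
    Finset.pow_eq_prod_const (x ^ d) n, ← Finset.prod_mul_distrib]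
  refine Finset.prod_congr rfl fun i hi => ?_
  have hid : i ≤ d := by rw [Finset.mem_range] at hi; omega
  rw [mul_sub, mul_one, ← zpow_natCast, ← zpow_natCast, ← zpow_add₀ hx]
  congr 2
  push_cast [hid]
  ring

theorem card_primitive_matrices (d n q : ℕ) (hnd : n ≤ d) (hq : 0 < q) :
    (Nat.card {R : Matrix (Fin d) (Fin n) (ZMod q) //
        Submodule.span (ZMod q) (Set.range fun i : Fin d => R i) = ⊤} : ℝ) =
      (q : ℝ) ^ (d * n) *
        ∏ p ∈ q.primeFactors, ∏ j ∈ Finset.Icc (d + 1 - n) d, (1 - (p : ℝ) ^ (-(j : ℤ))) := by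
  have : NeZero q := ⟨hq.ne'⟩
  have hprime (p : ℕ) (hp : p ∈ q.primeFactors) :
      ∏ i : Fin n, ((p ^ d - p ^ (i : ℕ) : ℕ) : ℝ) =
        (p : ℝ) ^ (d * n) * ∏ j ∈ Finset.Icc (d + 1 - n) d, (1 - (p : ℝ) ^ (-(j : ℤ))) := by
    have hp := (Nat.prime_of_mem_primeFactors hp).pos
    rw [← prod_pow_sub_pow_eq_pow_mul_prod_one_sub_zpow (by positivity) hnd]
    refine Finset.prod_congr rfl fun i _ => ?_
    rw [Nat.cast_sub (Nat.pow_le_pow_right hp (i.2.le.trans hnd)), Nat.cast_pow, Nat.cast_pow]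
  have hcount := congrArg (Nat.cast : ℕ → ℝ) (ZMod.card_span_row_eq_top_mul (q := q) hnd)
  push_cast only [Nat.cast_mul, Nat.cast_prod, Nat.cast_pow] at hcount
  rw [Finset.prod_congr rfl hprime, Finset.prod_mul_distrib, ← mul_assoc, mul_right_comm] at hcount
  have hP : ∏ p ∈ q.primeFactors, (p : ℝ) ^ (d * n) ≠ 0 :=
    Finset.prod_ne_zero_iff.2 fun p hp => by
      have := (Nat.prime_of_mem_primeFactors hp).pos; positivity
  exact mul_right_cancel₀ hP hcount
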